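/- arXiv:1608.04182 — 7 statements merged into one kernel-verified Lean document; each statement's English description precedes it below -/
import Mathlib

section
/- Let p be a prime, e > 0 an integer with p ∤ e, and g > 0 a multiple of the multiplicative order of p modulo e. Let n be a multiple of lcm(p-1, e), write n = d·e. Define b(i) = i + ⌊(i-1)/(p-1)⌋. Then the map from [1,n] × ℤ/gℤ to ℤ/eℤ sending (i, j) to b(i)·p^j mod e is surjective, and every fibre has exactly d·g elements. -/
/-!
Write `n = (p - 1) u`. Then `b` is an increasing bijection from `[1, n]` onto the integers in
`(0, p u] = (0, u + d e]` not divisible by `p`. For a residue `c`, that interval contains `A(c) + d`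
integers congruent to `c`, where `A(c)` counts those in `(0, u]`; the multiples of `p` among them
are the `p k` with `k ∈ (0, u]` and `k ≡ c p⁻¹`, so there are `A(c p⁻¹)` of them. Hence
`#{i | b(i) ≡ c} = A(c) + d - A(c p⁻¹)`, and summing over `c = x p⁻ʲ`, `j < g`, the `A`-terms
telescope away because `p ^ g ≡ 1`, leaving `d g`.
-/

open Finset

lemma mem_Icc_one_mul_iff {k u i : ℕ} :
    i ∈ Icc 1 (k * u) ↔ ∃ q < u, ∃ r < k, i = k * q + r + 1 := by
  constructor
  · intro hi
    rw [mem_Icc] at hi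
    have hk : 0 < k := Nat.pos_of_ne_zero (by rintro rfl; omega)
    refine ⟨(i - 1) / k, (Nat.div_lt_iff_lt_mul hk).2 (by rw [mul_comm]; omega),
      (i - 1) % k, Nat.mod_lt _ hk, ?_⟩
    have := Nat.div_add_mod (i - 1) k
    omega
  · rintro ⟨q, hq, r, hr, rfl⟩
    have : k * (q + 1) ≤ k * u := Nat.mul_le_mul_left k hq
    rw [mem_Icc]
    constructor <;> nlinarith

lemma card_filter_natCast_Ioc_add_mul (e : ℕ) [NeZero e] (t d : ℕ) (c : ZMod e) :
    #{m ∈ Ioc t (t + d * e) | ((m : ℕ) : ZMod e) = c} = d := by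
  have h := Nat.Ioc_filter_modEq_card t (t + d * e) (NeZero.pos e) c.val
  have hshift : ((t + d * e : ℕ) - (c.val : ℚ)) / e = (t - c.val) / e + d := by
    have he : (e : ℚ) ≠ 0 := Nat.cast_ne_zero.2 (NeZero.ne e)
    rw [Nat.cast_add, Nat.cast_mul, add_sub_right_comm, add_div, mul_div_cancel_right₀ _ he]
  rw [hshift, Int.floor_add_natCast, add_sub_cancel_left, max_eq_left (by positivity)] at h
  rw [← ZMod.natCast_zmod_val c]
  simp_rw [ZMod.natCast_eq_natCast_iff]
  exact_mod_cast h

/-- The `i`-th positive integer not divisible by `p` (for `p ≥ 2`, `i ≥ 1`): the `b(i)` of the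
statement. -/
def nthNonMultiple (p i : ℕ) : ℕ := i + (i - 1) / (p - 1)

section NonMultiple

variable {p : ℕ}

lemma nthNonMultiple_sub_one_mul_add {q r : ℕ} (hr : r < p - 1) :
    nthNonMultiple p ((p - 1) * q + r + 1) = p * q + r + 1 := by
  have hq : ((p - 1) * q + r) / (p - 1) = q := by
    rw [add_comm, Nat.add_mul_div_left _ _ (by omega), Nat.div_eq_of_lt hr, zero_add]
  rw [nthNonMultiple, add_tsub_cancel_right, hq, Nat.sub_one_mul]
  have : q ≤ p * q := Nat.le_mul_of_pos_left q (by omega)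
  omega

lemma mul_add_sub_div_self {q r : ℕ} (hr : r < p - 1) :
    p * q + r + 1 - (p * q + r + 1) / p = (p - 1) * q + r + 1 := by
  have hq : (p * q + r + 1) / p = q := by
    rw [add_assoc, add_comm, Nat.add_mul_div_left _ _ (by omega), Nat.div_eq_of_lt (by omega),
      zero_add]
  rw [hq, Nat.sub_one_mul]
  have : q ≤ p * q := Nat.le_mul_of_pos_left q (by omega)
  omega

lemma mem_Ioc_and_not_dvd_iff (hp : 2 ≤ p) {u m : ℕ} :
    m ∈ Ioc 0 (p * u) ∧ ¬ p ∣ m ↔ ∃ q < u, ∃ r < p - 1, m = p * q + r + 1 := by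
  have hdvd {q r : ℕ} (hr : r < p) : p ∣ p * q + r + 1 ↔ r = p - 1 := by
    rw [add_assoc, Nat.dvd_add_right (dvd_mul_right p q)]
    exact ⟨fun h => by have := Nat.le_of_dvd (by omega) h; omega,
      fun h => by rw [h, Nat.sub_add_cancel (by omega)]⟩
  rw [← Icc_add_one_left_eq_Ioc, zero_add, mem_Icc_one_mul_iff]
  constructor
  · rintro ⟨⟨q, hq, r, hr, rfl⟩, hnd⟩
    exact ⟨q, hq, r, by rw [hdvd hr] at hnd; omega, rfl⟩
  · rintro ⟨q, hq, r, hr, rfl⟩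
    exact ⟨⟨q, hq, r, by omega, rfl⟩, by rw [hdvd (by omega)]; omega⟩

lemma card_filter_nthNonMultiple (hp : 2 ≤ p) (u : ℕ) (P : ℕ → Prop) [DecidablePred P] :
    #{i ∈ Icc 1 ((p - 1) * u) | P (nthNonMultiple p i)} =
      #{m ∈ Ioc 0 (p * u) | ¬ p ∣ m ∧ P m} := by
  refine card_nbij' (nthNonMultiple p) (fun m => m - m / p) ?_ ?_ ?_ ?_
  · intro i hi
    simp only [mem_coe, mem_filter, ← and_assoc] at hi ⊢
    obtain ⟨⟨q, hq, r, hr, rfl⟩, hP⟩ := And.imp_left mem_Icc_one_mul_iff.1 hi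
    rw [mem_Ioc_and_not_dvd_iff hp]
    exact ⟨⟨q, hq, r, hr, nthNonMultiple_sub_one_mul_add hr⟩, hP⟩
  · intro m hm
    simp only [mem_coe, mem_filter, ← and_assoc] at hm ⊢
    obtain ⟨⟨q, hq, r, hr, rfl⟩, hP⟩ := And.imp_left (mem_Ioc_and_not_dvd_iff hp).1 hm
    rw [mul_add_sub_div_self hr, mem_Icc_one_mul_iff, nthNonMultiple_sub_one_mul_add hr]
    exact ⟨⟨q, hq, r, hr, rfl⟩, hP⟩
  · intro i hi
    obtain ⟨q, -, r, hr, rfl⟩ := mem_Icc_one_mul_iff.1 (mem_filter.1 hi).1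
    dsimp only
    rw [nthNonMultiple_sub_one_mul_add hr, mul_add_sub_div_self hr]
  · intro m hm
    simp only [mem_coe, mem_filter, ← and_assoc] at hm
    obtain ⟨q, -, r, hr, rfl⟩ := (mem_Ioc_and_not_dvd_iff hp).1 hm.1
    dsimp only
    rw [mul_add_sub_div_self hr, nthNonMultiple_sub_one_mul_add hr]

lemma card_filter_dvd (hp : 0 < p) (u : ℕ) (P : ℕ → Prop) [DecidablePred P] :
    #{m ∈ Ioc 0 (p * u) | p ∣ m ∧ P m} = #{k ∈ Ioc 0 u | P (p * k)} := by
  symm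
  refine card_nbij' (p * ·) (· / p) ?_ ?_ ?_ ?_
  · intro k hk
    simp only [mem_coe, mem_filter, mem_Ioc] at hk ⊢
    obtain ⟨hk, hP⟩ := hk
    exact ⟨⟨Nat.mul_pos hp hk.1, Nat.mul_le_mul_left p hk.2⟩, dvd_mul_right p k, hP⟩
  · intro m hm
    simp only [mem_coe, mem_filter, mem_Ioc] at hm ⊢
    obtain ⟨hm, ⟨k, rfl⟩, hP⟩ := hm
    rw [Nat.mul_div_cancel_left k hp]
    exact ⟨⟨Nat.pos_of_mul_pos_left hm.1, Nat.le_of_mul_le_mul_left hm.2 hp⟩, hP⟩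
  · intro k _
    exact Nat.mul_div_cancel_left k hp
  · intro m hm
    exact Nat.mul_div_cancel' (mem_filter.1 hm).2.1

end NonMultiple

section Fibre

variable {p e : ℕ} [NeZero e] {w : (ZMod e)ˣ} {u d : ℕ}

lemma card_filter_nthNonMultiple_add (hp : 2 ≤ p) (hw : (w : ZMod e) = p)
    (hu : (p - 1) * u = d * e) (c : ZMod e) :
    #{i ∈ Icc 1 ((p - 1) * u) | (nthNonMultiple p i : ZMod e) = c} +
        #{k ∈ Ioc 0 u | ((k : ℕ) : ZMod e) = c * ↑w⁻¹} =
      #{k ∈ Ioc 0 u | ((k : ℕ) : ZMod e) = c} + d := by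
  have hmul (k : ℕ) : (k : ZMod e) = c * ↑w⁻¹ ↔ ((p * k : ℕ) : ZMod e) = c := by
    rw [Units.eq_mul_inv_iff_mul_eq, Nat.cast_mul, ← hw, mul_comm]
  have hpu : p * u = u + d * e := by
    have := Nat.le_mul_of_pos_left u (by omega : 0 < p)
    rw [← hu, Nat.sub_one_mul]
    omega
  have hsplit := card_filter_add_card_filter_not
    (s := {m ∈ Ioc 0 (p * u) | ((m : ℕ) : ZMod e) = c}) (p ∣ ·)
  simp only [filter_filter, and_comm] at hsplit
  rw [card_filter_nthNonMultiple hp u (fun m => (m : ZMod e) = c), filter_congr (fun k _ => hmul k),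
    ← card_filter_dvd (by omega) u (fun m => (m : ZMod e) = c), add_comm, hsplit, hpu,
    ← Ioc_union_Ioc_eq_Ioc (Nat.zero_le u) (Nat.le_add_right u _), filter_union,
    card_union_of_disjoint (disjoint_filter_filter (Ioc_disjoint_Ioc_of_le le_rfl)),
    card_filter_natCast_Ioc_add_mul]

lemma card_filter_nthNonMultiple_mul_pow (hp : 2 ≤ p) (hw : (w : ZMod e) = p) {g : ℕ}
    (hwg : w ^ g = 1) (hu : (p - 1) * u = d * e) (x : ZMod e) :
    #{ij ∈ Icc 1 ((p - 1) * u) ×ˢ range g |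
        (nthNonMultiple p ij.1 : ZMod e) * (p : ZMod e) ^ ij.2 = x} = d * g := by
  set A : ℕ → ℕ := fun j => #{k ∈ Ioc 0 u | ((k : ℕ) : ZMod e) = x * ↑(w⁻¹ ^ j)}
  have hstep (j : ℕ) :
      #{i ∈ Icc 1 ((p - 1) * u) | (nthNonMultiple p i : ZMod e) * (p : ZMod e) ^ j = x} +
        A (j + 1) = A j + d := by
    have hpow : (p : ZMod e) ^ j = ↑(w ^ j) := by rw [Units.val_pow_eq_pow_val, hw]
    simp only [A, hpow, ← Units.eq_mul_inv_iff_mul_eq, ← inv_pow, pow_succ, Units.val_mul,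
      ← mul_assoc]
    exact card_filter_nthNonMultiple_add hp hw hu _
  have hperiod : ∑ j ∈ range g, A (j + 1) = ∑ j ∈ range g, A j := by
    have hAg : A g = A 0 := by simp only [A, inv_pow, hwg, inv_one, pow_zero]
    have := sum_range_succ' A g
    have := sum_range_succ A g
    omega
  have hsum := sum_congr rfl fun j (_ : j ∈ range g) => hstep j
  rw [sum_add_distrib, sum_add_distrib, hperiod, sum_const, card_range, smul_eq_mul] at hsum
  rw [card_filter, sum_product_right]
  simp only [← card_filter]
  rw [mul_comm g d] at hsum
  omega

end Fibre

theorem stmt_1_general (p e g n d : ℕ) (hp : p.Prime)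
    (hg : 0 < g) (hpg : p ^ g ≡ 1 [MOD e])
    (hn : 0 < n) (hn1 : (p - 1) ∣ n) (hnd : n = d * e) :
    (∀ x : ZMod e, ∃ i ∈ Finset.Icc 1 n, ∃ j ∈ Finset.range g,
        ((i + (i - 1) / (p - 1) : ℕ) : ZMod e) * (p : ZMod e) ^ j = x) ∧
    ∀ x : ZMod e,
      ((Finset.Icc 1 n ×ˢ Finset.range g).filter
        (fun ij => ((ij.1 + (ij.1 - 1) / (p - 1) : ℕ) : ZMod e) * (p : ZMod e) ^ ij.2 = x)).card
        = d * g := by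
  obtain ⟨u, rfl⟩ := hn1
  have hd : d ≠ 0 := by rintro rfl; omega
  have : NeZero e := ⟨by rintro rfl; omega⟩
  have hpg' : (p : ZMod e) ^ g = 1 := by
    exact_mod_cast (ZMod.natCast_eq_natCast_iff _ _ _).2 hpg
  have hcard (x : ZMod e) := card_filter_nthNonMultiple_mul_pow hp.two_le
    (Units.val_ofPowEqOne _ _ hpg' hg.ne') (Units.pow_ofPowEqOne hpg' hg.ne') hnd x
  refine ⟨fun x => ?_, hcard⟩
  have hpos : 0 < d * g := Nat.mul_pos (Nat.pos_of_ne_zero hd) hg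
  obtain ⟨⟨i, j⟩, hij⟩ := card_pos.1 ((hcard x).symm ▸ hpos)
  rw [mem_filter, mem_product] at hij
  exact ⟨i, hij.1.1, j, hij.1.2, hij.2⟩

/-- The map `[1,n] × ℤ/gℤ → ℤ/eℤ`, `(i,j) ↦ b(i)·p^j mod e`, is surjective and
every fibre has exactly `d·g` elements. -/
theorem stmt_1 (p e g n d : ℕ) (hp : p.Prime) (he : 0 < e) (hpe : ¬ p ∣ e)
    (hg : 0 < g) (hpg : p ^ g ≡ 1 [MOD e])
    (hn : 0 < n) (hn1 : (p - 1) ∣ n) (hnd : n = d * e) :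
    (∀ x : ZMod e, ∃ i ∈ Finset.Icc 1 n, ∃ j ∈ Finset.range g,
        ((i + (i - 1) / (p - 1) : ℕ) : ZMod e) * (p : ZMod e) ^ j = x) ∧
    ∀ x : ZMod e,
      ((Finset.Icc 1 n ×ˢ Finset.range g).filter
        (fun ij => ((ij.1 + (ij.1 - 1) / (p - 1) : ℕ) : ZMod e) * (p : ZMod e) ^ ij.2 = x)).card
        = d * g :=
  stmt_1_general p e g n d hp hg hpg hn hn1 hnd
end

section
/- With k, l, T, G = T ⋊ Σ as above, define for each r ∈ ℤ the k[G]-module l(r) with underlying k-vector space l, where σ acts by x ↦ x^q and t ∈ T acts by multiplication by θ(t)^r, θ: T → lˣ being the inclusion. Then the direct sum ⊕_{i ∈ ℤ/eℤ} l(i) is a free k[G]-module of rank 1. -/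
/-! By the normal basis theorem there is `α ∈ l` whose conjugates `α ^ q ^ b`, `b < f`, form a
`k`-basis of `l`. Put `m₀ = (α)ᵢ ∈ ⨁ l(i)`. The `j`-th coordinate of `τ ^ a σ ^ b • m₀` is
`η ^ (j a) α ^ q ^ b`, and the characters `j ↦ η ^ (j a)` of `ℤ/e` are `l`-linearly independent
(Dedekind), so these `e f` vectors are `k`-linearly independent. In particular they are pairwise
distinct, hence exhaust `G` as `|G| = e f`, and `r ↦ r • m₀` is a bijection `k[G] → ⨁ l(i)` by
counting dimensions. -/

open Module DirectSum

theorem FiniteField.exists_linearIndependent_pow_card_pow (k l : Type*) [Field k] [Fintype k]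
    [Field l] [Finite l] [Algebra k l] :
    ∃ α : l, LinearIndependent k fun b : Fin (finrank k l) ↦ α ^ Fintype.card k ^ (b : ℕ) := by
  have := Module.finite_of_finite k (M := l)
  obtain ⟨α, hα⟩ := exists_linearIndependent_algEquiv_apply k l
  refine ⟨α, ?_⟩
  convert hα.comp _ (bijective_frobeniusAlgEquivOfAlgebraic_pow k l).injective with b
  simp [coe_frobeniusAlgEquivOfAlgebraic_iterate]

theorem linearIndependent_pow_val_mul_val {L : Type*} [Field L] {e : ℕ} [NeZero e] {η : L}
    (hη : orderOf η = e) :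
    LinearIndependent L fun a j : ZMod e ↦ η ^ (a.val * j.val) := by
  have hηe : η ^ e = 1 := hη ▸ pow_orderOf_eq_one η
  have hχ (a : ZMod e) : (η ^ a.val) ^ e = 1 := by
    rw [← pow_mul, mul_comm, pow_mul, hηe, one_pow]
  let χ (a : ZMod e) : Multiplicative (ZMod e) →* L := (AddChar.zmodChar e (hχ a)).toMonoidHom
  have hχ_apply (a j : ZMod e) : χ a (.ofAdd j) = η ^ (a.val * j.val) := by
    simp [χ, AddChar.zmodChar_apply, pow_mul]
  have hχ_injective : Function.Injective χ := by
    intro a b hab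
    obtain rfl | he := (NeZero.one_le : 1 ≤ e).eq_or_lt
    · exact Subsingleton.elim a b
    have : Fact (1 < e) := ⟨he⟩
    have h := DFunLike.congr_fun hab (.ofAdd 1)
    rw [hχ_apply, hχ_apply, ZMod.val_one, mul_one, mul_one] at h
    exact ZMod.val_injective _ (pow_injOn_Iio_orderOf (hη ▸ a.val_lt) (hη ▸ b.val_lt) h)
  have hχ_coe : (fun a j : ZMod e ↦ η ^ (a.val * j.val)) = fun a ↦ ⇑(χ a) := by
    funext a j
    exact (hχ_apply a j).symm
  rw [hχ_coe]
  exact (linearIndependent_monoidHom (Multiplicative (ZMod e)) L).comp _ hχ_injective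

theorem MonoidAlgebra.bijective_toSpanSingleton_of_linearIndependent {k G M : Type*} [Field k]
    [Monoid G] [Fintype G] [AddCommGroup M] [Module k M] [Module (MonoidAlgebra k G) M]
    [IsScalarTower k (MonoidAlgebra k G) M] [FiniteDimensional k M] {m : M}
    (hm : LinearIndependent k fun g ↦ of k G g • m) (hdim : finrank k M = Fintype.card G) :
    Function.Bijective (LinearMap.toSpanSingleton (MonoidAlgebra k G) M m) := by
  let φ := (LinearMap.toSpanSingleton (MonoidAlgebra k G) M m).restrictScalars k
  have hsurj : Function.Surjective φ := by
    rw [← LinearMap.range_eq_top, eq_top_iff, ← hm.span_eq_top_of_card_eq_finrank' hdim.symm,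
      Submodule.span_le]
    rintro _ ⟨g, rfl⟩
    exact ⟨of k G g, rfl⟩
  have hrank : finrank k (MonoidAlgebra k G) = finrank k M := by
    rw [finrank_eq_card_basis (basis G k), hdim]
  have := Module.Finite.of_basis (basis G k)
  exact ⟨(LinearMap.injective_iff_surjective_of_finrank_eq_finrank hrank).mpr hsurj, hsurj⟩

namespace Representation

variable {k G V ι : Type*} [CommSemiring k] [Monoid G] [AddCommMonoid V] [Module k V]
  [Fintype ι] (ρ : ι → Representation k G V)

noncomputable def directSumAsModuleEquivPi : (⨁ i, (ρ i).asModule) ≃ₗ[k] (ι → V) :=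
  (DirectSum.linearEquivFunOnFintype k ι _).trans
    (LinearEquiv.piCongrRight fun i ↦ (ρ i).asModuleEquiv)

theorem directSumAsModuleEquivPi_of_smul (g : G) (m : ⨁ i, (ρ i).asModule) (i : ι) :
    directSumAsModuleEquivPi ρ (MonoidAlgebra.of k G g • m) i =
      ρ i g (directSumAsModuleEquivPi ρ m i) := by
  change (ρ i).asModuleEquiv (MonoidAlgebra.of k G g • m i) = _
  rw [asModuleEquiv_map_smul, asAlgebraHom_of]
  rfl

end Representation

theorem stmt_7_general
    (k l : Type) [Field k] [Fintype k] [Field l] [Fintype l] [Algebra k l]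
    (q e f : ℕ) (hq : q = Fintype.card k) (hf : f = Module.finrank k l) (he : 0 < e)
    (G : Type) [Group G] [Fintype G] (σg τg : G)
    (hcard : Nat.card G = e * f)
    (η : lˣ) (hη : orderOf η = e)
    (ρ : ℤ → Representation k G l)
    (hρσ : ∀ (r : ℤ) (x : l), ρ r σg x = x ^ q)
    (hρτ : ∀ (r : ℤ) (x : l), ρ r τg x = ((η ^ r : lˣ) : l) * x) :
    Nonempty ((⨁ i : ZMod e, (ρ (i.val : ℤ)).asModule)
      ≃ₗ[MonoidAlgebra k G] MonoidAlgebra k G) := by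
  subst hq hf
  have : NeZero e := ⟨he.ne'⟩
  obtain ⟨α, hα⟩ := FiniteField.exists_linearIndependent_pow_card_pow k l
  let E := Representation.directSumAsModuleEquivPi fun i : ZMod e ↦ ρ i.val
  let m₀ := E.symm fun _ ↦ α
  let Φ (p : Fin (finrank k l) × ZMod e) : G := τg ^ p.2.val * σg ^ (p.1 : ℕ)
  have hσ_pow (r : ℤ) (b : ℕ) (x : l) : ρ r (σg ^ b) x = x ^ Fintype.card k ^ b := by
    rw [map_pow, Module.End.coe_pow, funext (hρσ r), pow_iterate]
  have hτ_pow (r : ℤ) (a : ℕ) (x : l) : ρ r (τg ^ a) x = ((η ^ r : lˣ) : l) ^ a * x := by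
    rw [map_pow, Module.End.coe_pow, funext (hρτ r), mul_left_iterate]
  have hcoords : (fun p ↦ E (MonoidAlgebra.of k G (Φ p) • m₀)) =
      fun p ↦ α ^ Fintype.card k ^ (p.1 : ℕ) • fun j : ZMod e ↦ (η : l) ^ (p.2.val * j.val) := by
    funext p j
    rw [Representation.directSumAsModuleEquivPi_of_smul, LinearEquiv.apply_symm_apply, map_mul,
      Module.End.mul_apply, hσ_pow, hτ_pow, Pi.smul_apply, smul_eq_mul, mul_comm, zpow_natCast,
      Units.val_pow_eq_pow_val, ← pow_mul, mul_comm j.val]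
  have hΦ_li : LinearIndependent k fun p ↦ MonoidAlgebra.of k G (Φ p) • m₀ :=
    LinearIndependent.of_comp E.toLinearMap <| by
      simpa only [Function.comp_def, LinearEquiv.coe_coe, hcoords] using
        linearIndependent_smul hα (linearIndependent_pow_val_mul_val (by rwa [orderOf_units]))
  have hΦ : Function.Bijective Φ :=
    (hΦ_li.injective.of_comp (f := fun g ↦ MonoidAlgebra.of k G g • m₀)).bijective_of_nat_card_le
      (by rw [Nat.card_prod, Nat.card_eq_fintype_card (α := Fin _), Fintype.card_fin,
        Nat.card_zmod, hcard, mul_comm])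
  have hdim : finrank k (⨁ i : ZMod e, (ρ (i.val : ℤ)).asModule) = Fintype.card G := by
    rw [E.finrank_eq, finrank_pi_fintype, Finset.sum_const, Finset.card_univ, ZMod.card,
      smul_eq_mul, Fintype.card_eq_nat_card, hcard, mul_comm]
  have hli : LinearIndependent k fun g ↦ MonoidAlgebra.of k G g • m₀ :=
    (linearIndependent_equiv (Equiv.ofBijective Φ hΦ)).mp hΦ_li
  exact ⟨(LinearEquiv.ofBijective _
    (MonoidAlgebra.bijective_toSpanSingleton_of_linearIndependent (m := m₀) hli hdim)).symm⟩

/-- With `G = T ⋊ Σ` presented by `σ, τ` with `σ^f = 1`, `τ^e = 1`, `στσ⁻¹ = τ^q`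
(`q = |k|`, `f = [l:k]`, `e = ord(η)` for `η = θ(τ)` a root of unity of order `e`),
and `l(r)` the `k[G]`-module with underlying `k`-space `l`, `σ` acting by `x ↦ x^q`
and `τ` by multiplication by `η^r`, the direct sum `⊕_{i ∈ ℤ/eℤ} l(i)` is a free
`k[G]`-module of rank `1`. -/
theorem stmt_7 (p : ℕ) (hp : p.Prime)
    (k l : Type) [Field k] [Fintype k] [CharP k p] [Field l] [Fintype l] [Algebra k l]
    (q e f : ℕ) (hq : q = Fintype.card k) (hf : f = Module.finrank k l) (he : 0 < e)
    (G : Type) [Group G] [Fintype G] (σg τg : G)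
    (hσ : orderOf σg = f) (hτ : orderOf τg = e)
    (hrel : σg * τg * σg⁻¹ = τg ^ q)
    (hgen : Subgroup.closure ({σg, τg} : Set G) = ⊤)
    (hcard : Nat.card G = e * f)
    (η : lˣ) (hη : orderOf η = e)
    (ρ : ℤ → Representation k G l)
    (hρσ : ∀ (r : ℤ) (x : l), ρ r σg x = x ^ q)
    (hρτ : ∀ (r : ℤ) (x : l), ρ r τg x = ((η ^ r : lˣ) : l) * x) :
    Nonempty ((⨁ i : ZMod e, (ρ (i.val : ℤ)).asModule)
      ≃ₗ[MonoidAlgebra k G] MonoidAlgebra k G) :=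
  stmt_7_general k l q e f hq hf he G σg τg hcard η hη ρ hρσ hρτ
end

section
/- With notation as above, the base change l(r) ⊗_{𝔽_p[G]} l[G] is isomorphic as an l[G]-module to the direct sum ⊕_{j ∈ ℤ/gℤ} L_j where L_j is an l-line on which T acts via the character θ^{r p^j}, and σ permutes the lines by (x_j) ↦ (x_{j+a}), where a = [k : 𝔽_p] and g = a·f. -/
/-!
The comparison map `c ⊗ x ↦ (c · x ^ p ^ j)_{j ∈ ℤ/gℤ}` from `l ⊗_{𝔽_p} l` to `l^{ℤ/gℤ}`
is `l`-linear between spaces of the same dimension `g`. It is surjective because a linear form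
vanishing on its image is a relation `∑ d_j x ^ p ^ j = 0` between the `g` distinct powers of
the Frobenius, which Dedekind's independence of characters forbids. Since `σ` raises to the power
`q = p ^ a` and `τ` multiplies by `θ^r`, the map turns these actions into the shift by `a` and
multiplication by `θ^{r p^j}` on the `j`-th coordinate, so it is `G`-equivariant.
-/

open scoped TensorProduct

namespace Representation

variable {A G V W : Type*} [CommSemiring A] [AddCommMonoid V] [AddCommMonoid W]
  [Module A V] [Module A W]

noncomputable def Equiv.asModuleEquiv [Monoid G] {ρ : Representation A G V}
    {σ : Representation A G W} (φ : ρ.Equiv σ) :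
    ρ.asModule ≃ₗ[MonoidAlgebra A G] σ.asModule :=
  { IntertwiningMap.equivLinearMapAsModule ρ σ φ.toIntertwiningMap with
    invFun := IntertwiningMap.equivLinearMapAsModule σ ρ φ.symm.toIntertwiningMap
    left_inv := φ.symm_apply_apply
    right_inv := φ.apply_symm_apply }

theorem isIntertwiningMap_of_closure_eq_top [Group G] {ρ : Representation A G V}
    {σ : Representation A G W} {S : Set G} (hS : Subgroup.closure S = ⊤) (f : V →ₗ[A] W)
    (hf : ∀ g ∈ S, f ∘ₗ ρ g = σ g ∘ₗ f) : IsIntertwiningMap ρ σ f := by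
  refine ⟨fun g => ?_⟩
  have hg : g ∈ Subgroup.closure S := hS ▸ Subgroup.mem_top g
  induction hg using Subgroup.closure_induction with
  | mem g hg => exact LinearMap.congr_fun (hf g hg)
  | one => simp
  | mul g h _ _ hg hh => intro v; simp [hg, hh]
  | inv g _ hg => intro v; rw [← σ.inv_self_apply g (f (ρ g⁻¹ v)), ← hg, ρ.self_inv_apply]

end Representation

section FrobeniusTensor

variable (p : ℕ) [Fact p.Prime] (l : Type*) [Field l] [Algebra (ZMod p) l]

theorem frobeniusAlgHom_zmod_pow_apply (n : ℕ) (x : l) :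
    (FiniteField.frobeniusAlgHom (ZMod p) l ^ n) x = x ^ p ^ n := by
  rw [AlgHom.coe_pow, FiniteField.coe_frobeniusAlgHom, pow_iterate, ZMod.card]

noncomputable def frobeniusTensorMap (g : ℕ) : l ⊗[ZMod p] l →ₗ[l] (ZMod g → l) :=
  TensorProduct.AlgebraTensorModule.lift <| LinearMap.toSpanSingleton l _ <|
    LinearMap.pi fun j : ZMod g => (FiniteField.frobeniusAlgHom (ZMod p) l ^ j.val).toLinearMap

@[simp]
theorem frobeniusTensorMap_tmul (g : ℕ) (c x : l) (j : ZMod g) :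
    frobeniusTensorMap p l g (c ⊗ₜ x) j = c * x ^ p ^ j.val := by
  simp [frobeniusTensorMap, frobeniusAlgHom_zmod_pow_apply]

theorem frobeniusTensorMap_tmul_mul (g : ℕ) (c u x : l) (j : ZMod g) :
    frobeniusTensorMap p l g (c ⊗ₜ (u * x)) j =
      u ^ p ^ j.val * frobeniusTensorMap p l g (c ⊗ₜ x) j := by
  simp only [frobeniusTensorMap_tmul, mul_pow]
  ring

variable [Fintype l]

theorem finrank_zmod_eq_of_card_eq {n : ℕ} (h : Fintype.card l = p ^ n) :
    Module.finrank (ZMod p) l = n := by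
  have := Module.card_eq_pow_finrank (K := ZMod p) (V := l)
  rw [ZMod.card, h] at this
  exact (Nat.pow_right_injective (Fact.out : p.Prime).two_le this).symm

variable {p l} {g : ℕ} (hg : Module.finrank (ZMod p) l = g)
include hg

theorem neZero_of_finrank_zmod_eq : NeZero g := ⟨hg ▸ Module.finrank_pos.ne'⟩

theorem orderOf_frobeniusAlgHom_zmod : orderOf (FiniteField.frobeniusAlgHom (ZMod p) l) = g :=
  (FiniteField.orderOf_frobeniusAlgHom (ZMod p) l).trans hg

theorem frobeniusAlgHom_zmod_pow_injective :
    Function.Injective fun j : ZMod g => FiniteField.frobeniusAlgHom (ZMod p) l ^ j.val := by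
  have := neZero_of_finrank_zmod_eq hg
  intro i j hij
  refine ZMod.val_injective g (pow_injOn_Iio_orderOf ?_ ?_ hij) <;>
    simpa [orderOf_frobeniusAlgHom_zmod hg] using ZMod.val_lt _

theorem frobeniusTensorMap_tmul_pow (a : ℕ) (c x : l) (j : ZMod g) :
    frobeniusTensorMap p l g (c ⊗ₜ (x ^ p ^ a)) j =
      frobeniusTensorMap p l g (c ⊗ₜ x) (j + a) := by
  have := neZero_of_finrank_zmod_eq hg
  simp only [frobeniusTensorMap_tmul, ← frobeniusAlgHom_zmod_pow_apply, ← AlgHom.mul_apply,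
    ← pow_add]
  have hmod : (j.val + a) % g = (j + a : ZMod g).val % g := by
    rw [← ZMod.natCast_eq_natCast_iff']
    simp
  rw [← pow_mod_orderOf, ← pow_mod_orderOf _ (j + a : ZMod g).val,
    orderOf_frobeniusAlgHom_zmod hg, hmod]

theorem frobeniusTensorMap_surjective : Function.Surjective (frobeniusTensorMap p l g) := by
  have := neZero_of_finrank_zmod_eq hg
  rw [← LinearMap.range_eq_top]
  by_contra h
  obtain ⟨φ, hφ, hker⟩ := Submodule.exists_le_ker_of_lt_top _ (lt_top_iff_ne_top.2 h)
  set d : ZMod g → l := fun j => φ fun i => if j = i then 1 else 0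
  have hφd : ∀ y, φ y = ∑ j, y j * d j := fun y => φ.pi_apply_eq_sum_univ y
  have hrel : ∑ j, d j • (FiniteField.frobeniusAlgHom (ZMod p) l ^ j.val).toLinearMap = 0 := by
    ext x
    rw [LinearMap.sum_apply, LinearMap.zero_apply]
    simp only [LinearMap.smul_apply, AlgHom.toLinearMap_apply, frobeniusAlgHom_zmod_pow_apply,
      smul_eq_mul]
    have : φ (frobeniusTensorMap p l g (1 ⊗ₜ x)) = 0 := hker ⟨_, rfl⟩
    simpa [hφd, mul_comm] using this
  have hind := (linearIndependent_algHom_toLinearMap (ZMod p) l l).comp _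
    (frobeniusAlgHom_zmod_pow_injective hg)
  have hd : d = 0 := funext (Fintype.linearIndependent_iff.1 hind d hrel)
  exact hφ (LinearMap.ext fun y => by simp [hφd, hd])

theorem frobeniusTensorMap_bijective : Function.Bijective (frobeniusTensorMap p l g) := by
  have := neZero_of_finrank_zmod_eq hg
  have hdim : Module.finrank l (l ⊗[ZMod p] l) = Module.finrank l (ZMod g → l) := by
    rw [Module.finrank_baseChange, hg, Module.finrank_fintype_fun_eq_card, ZMod.card]
  have hsurj := frobeniusTensorMap_surjective hg
  exact ⟨(LinearMap.injective_iff_surjective_of_finrank_eq_finrank hdim).2 hsurj, hsurj⟩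

end FrobeniusTensor

theorem stmt_9_general (p : ℕ) (hp : p.Prime)
    (k l : Type) [Field k] [Fintype k] [Field l] [Fintype l] [Algebra k l]
    [Algebra (ZMod p) l]
    (q f a g : ℕ) (hq : q = Fintype.card k) (ha : Fintype.card k = p ^ a)
    (hf : f = Module.finrank k l) (hg : g = a * f)
    (G : Type) [Group G] (σg τg : G)
    (hgen : Subgroup.closure ({σg, τg} : Set G) = ⊤)
    (η : lˣ)
    (r : ℤ)
    (ρp : Representation (ZMod p) G l)
    (hρσ : ∀ x : l, ρp σg x = x ^ q)
    (hρτ : ∀ x : l, ρp τg x = ((η ^ r : lˣ) : l) * x)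
    (ρbar : Representation l G (l ⊗[ZMod p] l))
    (hbar : ∀ (g₀ : G) (c x : l), ρbar g₀ (c ⊗ₜ[ZMod p] x) = c ⊗ₜ[ZMod p] (ρp g₀ x))
    (ρ' : Representation l G (ZMod g → l))
    (hσ' : ∀ (x : ZMod g → l) (j : ZMod g), ρ' σg x j = x (j + (a : ZMod g)))
    (hτ' : ∀ (x : ZMod g → l) (j : ZMod g),
      ρ' τg x j = ((η ^ (r * (p : ℤ) ^ j.val) : lˣ) : l) * x j) :
    Nonempty (ρbar.asModule ≃ₗ[MonoidAlgebra l G] ρ'.asModule) := by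
  have : Fact p.Prime := ⟨hp⟩
  have hrank : Module.finrank (ZMod p) l = g := by
    refine finrank_zmod_eq_of_card_eq p l ?_
    rw [Module.card_eq_pow_finrank (K := k), ha, ← hf, ← pow_mul, ← hg]
  set Φ := frobeniusTensorMap p l g
  have hσ : Φ ∘ₗ ρbar σg = ρ' σg ∘ₗ Φ :=
    TensorProduct.AlgebraTensorModule.ext fun c x => funext fun j => by
      simp only [LinearMap.comp_apply, hbar, hρσ, hσ', hq, ha, Φ,
        frobeniusTensorMap_tmul_pow hrank]
  have hτ : Φ ∘ₗ ρbar τg = ρ' τg ∘ₗ Φ :=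
    TensorProduct.AlgebraTensorModule.ext fun c x => funext fun j => by
      simp only [LinearMap.comp_apply, hbar, hρτ, hτ', Φ, frobeniusTensorMap_tmul_mul,
        zpow_mul, ← Nat.cast_pow, zpow_natCast, Units.val_pow_eq_pow_val]
  have hΦ := Representation.isIntertwiningMap_of_closure_eq_top hgen Φ (by
    rintro g₀ (rfl | rfl)
    exacts [hσ, hτ])
  exact ⟨((Φ.intertwiningMap_of_isIntertwiningMap ρbar ρ' hΦ.1).ofBijective
    (frobeniusTensorMap_bijective hrank)).asModuleEquiv⟩

/-- The base change `l(r) ⊗_{𝔽_p[G]} l[G]` (realised as `l ⊗_{𝔽_p} l(r)` with `G`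
acting on the second factor and `l` on the first) is `l[G]`-isomorphic to
`⊕_{j ∈ ℤ/gℤ} L_j`, where `L_j` is an `l`-line on which `T` acts via `θ^{r p^j}`
and `σ` permutes the lines by `(x_j) ↦ (x_{j+a})`, `a = [k : 𝔽_p]`, `g = a·f`. -/
theorem stmt_9 (p : ℕ) (hp : p.Prime)
    (k l : Type) [Field k] [Fintype k] [CharP k p] [Field l] [Fintype l] [Algebra k l]
    [Algebra (ZMod p) l]
    (q e f a g : ℕ) (hq : q = Fintype.card k) (ha : Fintype.card k = p ^ a)
    (hf : f = Module.finrank k l) (hg : g = a * f) (he : 0 < e)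
    (G : Type) [Group G] [Fintype G] (σg τg : G)
    (hσ : orderOf σg = f) (hτ : orderOf τg = e)
    (hrel : σg * τg * σg⁻¹ = τg ^ q)
    (hgen : Subgroup.closure ({σg, τg} : Set G) = ⊤)
    (hcard : Nat.card G = e * f)
    (η : lˣ) (hη : orderOf η = e)
    (r : ℤ)
    (ρp : Representation (ZMod p) G l)
    (hρσ : ∀ x : l, ρp σg x = x ^ q)
    (hρτ : ∀ x : l, ρp τg x = ((η ^ r : lˣ) : l) * x)
    (ρbar : Representation l G (l ⊗[ZMod p] l))
    (hbar : ∀ (g₀ : G) (c x : l), ρbar g₀ (c ⊗ₜ[ZMod p] x) = c ⊗ₜ[ZMod p] (ρp g₀ x))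
    (ρ' : Representation l G (ZMod g → l))
    (hσ' : ∀ (x : ZMod g → l) (j : ZMod g), ρ' σg x j = x (j + (a : ZMod g)))
    (hτ' : ∀ (x : ZMod g → l) (j : ZMod g),
      ρ' τg x j = ((η ^ (r * (p : ℤ) ^ j.val) : lˣ) : l) * x j) :
    Nonempty (ρbar.asModule ≃ₗ[MonoidAlgebra l G] ρ'.asModule) :=
  stmt_9_general p hp k l q f a g hq ha hf hg G σg τg hgen η r ρp hρσ hρτ ρbar hbar ρ' hσ' hτ'
end

section
/- With notation as above, the 𝔽_p[G]-modules l(r) and l(s) are isomorphic if and only if the characters θ^r and θ^s of T lie in the same orbit under the p-power Frobenius, i.e., if and only if s ≡ r·p^j (mod e) for some integer j. -/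
/-!
An isomorphism `l(r) ≅ l(s)` is an `𝔽_p`-linear bijection `E` of `l` intertwining the two
`G`-actions. On `t` this says `E (ζ x) = ξ E x` with `ζ = θ(t)^r`, `ξ = θ(t)^s`, so conjugation
by `E` carries multiplication by `P(ζ)` to multiplication by `P(ξ)` for every `P ∈ 𝔽_p[X]`:
hence `ξ` is a root of the minimal polynomial of `ζ`, i.e. a Galois conjugate `ζ^(p^j)`.
Conversely a Galois automorphism with `ζ ↦ ξ` is a ring automorphism, so it commutes with
`x ↦ x^q` and intertwines the actions of `t`; as `σ` and `t` generate `G`, it is an isomorphism.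
-/

open Polynomial

namespace Representation

variable {A G V W : Type*} [CommSemiring A] [AddCommMonoid V] [AddCommMonoid W]
  [Module A V] [Module A W]

theorem nonempty_asModule_linearEquiv_iff [Monoid G] (ρ : Representation A G V)
    (σ : Representation A G W) :
    Nonempty (ρ.asModule ≃ₗ[MonoidAlgebra A G] σ.asModule) ↔ Nonempty (ρ.Equiv σ) := by
  constructor
  · rintro ⟨F⟩
    exact ⟨{ (IntertwiningMap.equivLinearMapAsModule ρ σ).symm F.toLinearMap with
      invFun := F.symm
      left_inv := F.left_inv
      right_inv := F.right_inv }⟩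
  · rintro ⟨φ⟩
    exact ⟨.ofLinearMap (IntertwiningMap.equivLinearMapAsModule ρ σ φ.toIntertwiningMap)
      (IntertwiningMap.equivLinearMapAsModule σ ρ φ.symm.toIntertwiningMap)
      (LinearMap.ext φ.apply_symm_apply) (LinearMap.ext φ.symm_apply_apply)⟩

theorem comp_eq_comp_of_closure_eq_top [Group G] {ρ : Representation A G V}
    {σ : Representation A G W} {S : Set G} (hS : Subgroup.closure S = ⊤) (e : V ≃ₗ[A] W)
    (he : ∀ g ∈ S, e ∘ₗ ρ g = σ g ∘ₗ e) (g : G) : e ∘ₗ ρ g = σ g ∘ₗ e := by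
  have hconj (h : G) : e.conjAlgEquiv A (ρ h) = σ h ↔ e ∘ₗ ρ h = σ h ∘ₗ e := by
    rw [LinearEquiv.conjAlgEquiv_apply, ← LinearMap.comp_assoc,
      LinearEquiv.comp_toLinearMap_symm_eq]
  have hconj_comp : (e.conjAlgEquiv A : Module.End A V →* Module.End A W).comp ρ = σ :=
    MonoidHom.eq_of_eqOn_dense hS fun h hh => (hconj h).2 (he h hh)
  exact (hconj g).1 (DFunLike.congr_fun hconj_comp g)

end Representation

theorem Polynomial.aeval_eq_zero_of_linearEquiv_mul {K A B : Type*} [CommSemiring K]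
    [Semiring A] [Semiring B] [Algebra K A] [Algebra K B] (E : A ≃ₗ[K] B) {ζ : A} {ξ : B}
    (hE : ∀ x, E (ζ * x) = ξ * E x) {P : K[X]} (hP : aeval ζ P = 0) : aeval ξ P = 0 := by
  have hconj : E.conjAlgEquiv K (Algebra.lmul K A ζ) = Algebra.lmul K B ξ := by
    ext x; simp [hE]
  apply Algebra.lmul_injective (R := K)
  rw [map_zero, ← aeval_algHom_apply, ← hconj, aeval_algEquiv, AlgHom.comp_apply,
    aeval_algHom_apply, hP, map_zero, map_zero]

theorem FiniteField.exists_algEquiv_apply_eq_iff {K L : Type*} [Field K] [Fintype K] [Field L]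
    [Finite L] [Algebra K L] {x y : L} :
    (∃ σ : L ≃ₐ[K] L, σ x = y) ↔ ∃ j : ℕ, x ^ Fintype.card K ^ j = y := by
  have hpow (j : ℕ) : ⇑(frobeniusAlgEquivOfAlgebraic K L ^ j) = (· ^ Fintype.card K ^ j) := by
    rw [AlgEquiv.coe_pow, coe_frobeniusAlgEquivOfAlgebraic_iterate]
  constructor
  · rintro ⟨σ, rfl⟩
    obtain ⟨j, rfl⟩ := (bijective_frobeniusAlgEquivOfAlgebraic_pow K L).2 σ
    exact ⟨j, (congrFun (hpow j) x).symm⟩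
  · rintro ⟨j, rfl⟩
    exact ⟨_, congrFun (hpow j) x⟩

theorem Units.val_zpow_pow_eq_val_zpow_iff {M : Type*} [Monoid M] (η : Mˣ) (r s : ℤ) (n : ℕ) :
    ((η ^ r : Mˣ) : M) ^ n = ((η ^ s : Mˣ) : M) ↔ s ≡ r * n [ZMOD orderOf η] := by
  rw [← Units.val_pow_eq_pow_val, Units.val_inj, ← zpow_natCast, ← zpow_mul,
    zpow_eq_zpow_iff_modEq]
  exact Int.modEq_comm

theorem stmt_10_general (p : ℕ) (hp : p.Prime)
    (l : Type) [Field l] [Fintype l]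
    [Algebra (ZMod p) l]
    (q e : ℕ)
    (G : Type) [Group G] (σg τg : G)
    (hgen : Subgroup.closure ({σg, τg} : Set G) = ⊤)
    (η : lˣ) (hη : orderOf η = e)
    (ρp : ℤ → Representation (ZMod p) G l)
    (hρσ : ∀ (r : ℤ) (x : l), ρp r σg x = x ^ q)
    (hρτ : ∀ (r : ℤ) (x : l), ρp r τg x = ((η ^ r : lˣ) : l) * x) :
    ∀ r s : ℤ,
      Nonempty ((ρp r).asModule ≃ₗ[MonoidAlgebra (ZMod p) G] (ρp s).asModule) ↔
      ∃ j : ℕ, s ≡ r * (p : ℤ) ^ j [ZMOD (e : ℤ)] := by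
  intro r s
  have : Fact p.Prime := ⟨hp⟩
  rw [Representation.nonempty_asModule_linearEquiv_iff]
  trans ∃ σ : l ≃ₐ[ZMod p] l, σ ((η ^ r : lˣ) : l) = ((η ^ s : lˣ) : l)
  · constructor
    · rintro ⟨φ⟩
      have hφ (x : l) :
          φ.toLinearEquiv ((η ^ r : lˣ) * x) = (η ^ s : lˣ) * φ.toLinearEquiv x := by
        have := Representation.IntertwiningMap.isIntertwining _ _ φ.toIntertwiningMap τg x
        rwa [hρτ, hρτ] at this
      exact minpoly.exists_algEquiv_of_root' (Algebra.IsAlgebraic.isAlgebraic _)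
        (aeval_eq_zero_of_linearEquiv_mul φ.toLinearEquiv hφ (minpoly.aeval _ _))
    · rintro ⟨σ, hσ⟩
      refine ⟨.mk σ.toLinearEquiv (Representation.comp_eq_comp_of_closure_eq_top hgen _ ?_)⟩
      rintro g (rfl | rfl) <;> ext x
      · simp [hρσ]
      · simp only [LinearMap.coe_comp, Function.comp_apply, LinearEquiv.coe_coe,
          AlgEquiv.toLinearEquiv_apply, hρτ, map_mul, hσ]
  · simp_rw [FiniteField.exists_algEquiv_apply_eq_iff, ZMod.card,
      Units.val_zpow_pow_eq_val_zpow_iff, hη, Nat.cast_pow]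

/-- The `𝔽_p[G]`-modules `l(r)` and `l(s)` are isomorphic iff the characters
`θ^r` and `θ^s` are in the same Frobenius orbit, i.e. iff `s ≡ r·p^j (mod e)`
for some `j`. -/
theorem stmt_10 (p : ℕ) (hp : p.Prime)
    (k l : Type) [Field k] [Fintype k] [CharP k p] [Field l] [Fintype l] [Algebra k l]
    [Algebra (ZMod p) l]
    (q e f : ℕ) (hq : q = Fintype.card k) (hf : f = Module.finrank k l) (he : 0 < e)
    (G : Type) [Group G] [Fintype G] (σg τg : G)
    (hσ : orderOf σg = f) (hτ : orderOf τg = e)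
    (hrel : σg * τg * σg⁻¹ = τg ^ q)
    (hgen : Subgroup.closure ({σg, τg} : Set G) = ⊤)
    (hcard : Nat.card G = e * f)
    (η : lˣ) (hη : orderOf η = e)
    (ρp : ℤ → Representation (ZMod p) G l)
    (hρσ : ∀ (r : ℤ) (x : l), ρp r σg x = x ^ q)
    (hρτ : ∀ (r : ℤ) (x : l), ρp r τg x = ((η ^ r : lˣ) : l) * x) :
    ∀ r s : ℤ,
      Nonempty ((ρp r).asModule ≃ₗ[MonoidAlgebra (ZMod p) G] (ρp s).asModule) ↔
      ∃ j : ℕ, s ≡ r * (p : ℤ) ^ j [ZMOD (e : ℤ)] :=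
  stmt_10_general p hp l q e G σg τg hgen η hη ρp hρσ hρτ
end

section
/- With notation as above, for every r ∈ ℤ the module l(r) is projective both as a k[G]-module and as an 𝔽_p[G]-module. -/
/-!
The twist `l(0)` is `l` with `G` acting by field automorphisms through a surjection
`G → Gal(l/k)` whose kernel has order `e`, prime to `p` since `e` divides `|lˣ| = |l| - 1`.
Every `l(r)` is semilinear over it: `ρ_r g (x * y) = ρ_0 g x * ρ_r g y`. Choosing
`c ∈ l` with `Tr_{l/k} c = 1/e` gives `∑ g, ρ_0 g c = e • Tr c = 1`, hence
`∑ g, ρ_r g ∘ (c * ·) ∘ ρ_r g⁻¹ = id`, and Higman's criterion makes `l(r)` projective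
over `k[G]` and over `𝔽_p[G]`.
-/

open TensorProduct

namespace Representation

section Higman

variable {k G V : Type*} [CommRing k] [Group G] [AddCommGroup V] [Module k V]
  (ρ : Representation k G V)

theorem asModuleEquiv_single_one_smul (g : G) (m : ρ.asModule) :
    ρ.asModuleEquiv (MonoidAlgebra.single g (1 : k) • m) = ρ g (ρ.asModuleEquiv m) := by
  rw [asModuleEquiv_map_smul, asAlgebraHom_single, one_smul]

/-- Higman's criterion: `m ↦ ∑ g, g ⊗ u (g⁻¹ m)` splits the action map `k[G] ⊗[k] V → V`. -/
theorem asModule_projective_of_sum_conj_eq_id [Fintype G] [Module.Projective k V]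
    (u : V →ₗ[k] V) (hu : ∑ g : G, ρ g ∘ₗ u ∘ₗ ρ g⁻¹ = LinearMap.id) :
    Module.Projective (MonoidAlgebra k G) ρ.asModule := by
  have : Module.Projective k ρ.asModule := .of_equiv ρ.asModuleEquiv.symm
  let π : MonoidAlgebra k G ⊗[k] ρ.asModule →ₗ[MonoidAlgebra k G] ρ.asModule :=
    AlgebraTensorModule.lift (LinearMap.toSpanSingleton _ _ LinearMap.id)
  let s : ρ.asModule →ₗ[k] MonoidAlgebra k G ⊗[k] ρ.asModule :=
    ∑ g : G, TensorProduct.mk k _ _ (MonoidAlgebra.single g 1) ∘ₗ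
      ρ.asModuleEquiv.symm.toLinearMap ∘ₗ u ∘ₗ ρ g⁻¹ ∘ₗ ρ.asModuleEquiv.toLinearMap
  have hs : ∀ (h : G) (m : ρ.asModule),
      s (MonoidAlgebra.single h (1 : k) • m) = MonoidAlgebra.single h (1 : k) • s m := by
    intro h m
    simp only [s, LinearMap.coe_sum, Finset.sum_apply, LinearMap.comp_apply, Finset.smul_sum,
      LinearEquiv.coe_coe, asModuleEquiv_single_one_smul, mk_apply, smul_tmul', smul_eq_mul,
      MonoidAlgebra.single_mul_single, mul_one]
    exact Fintype.sum_equiv (Equiv.mulLeft h⁻¹) _ _ fun g => by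
      simp [← Module.End.mul_apply, ← map_mul]
  refine .of_split (MonoidAlgebra.equivariantOfLinearOfComm s hs) π (LinearMap.ext fun m => ?_)
  apply ρ.asModuleEquiv.injective
  simp only [s, π, MonoidAlgebra.equivariantOfLinearOfComm_apply, LinearMap.coe_sum,
    Finset.sum_apply, LinearMap.comp_apply, mk_apply, map_sum, LinearEquiv.coe_coe,
    AlgebraTensorModule.lift_tmul, LinearMap.toSpanSingleton_apply, LinearMap.smul_apply,
    LinearMap.id_apply, asModuleEquiv_single_one_smul, LinearEquiv.apply_symm_apply]
  simpa using LinearMap.congr_fun hu (ρ.asModuleEquiv m)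

end Higman

section Semilinear

variable {k₀ k G V : Type*} [CommSemiring k₀] [CommSemiring k] [Group G]

theorem map_mul_eq_of_closure_eq_top [Semiring V] [Module k₀ V] [Module k V]
    (Φ : Representation k G V) (ρ : Representation k₀ G V) {s : Set G}
    (hs : Subgroup.closure s = ⊤) (h : ∀ g ∈ s, ∀ x y, ρ g (x * y) = Φ g x * ρ g y)
    (g : G) (x y : V) : ρ g (x * y) = Φ g x * ρ g y := by
  induction hs ▸ Subgroup.mem_top g using Subgroup.closure_induction generalizing x y with
  | mem g hg => exact h g hg x y
  | one => simp
  | mul g g' _ _ hg hg' => simp [hg', hg]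
  | inv g _ hg =>
    conv_lhs => rw [← Φ.self_inv_apply g x, ← ρ.self_inv_apply g y, ← hg, ρ.inv_self_apply]

theorem map_mul_eq_of_frobenius_twist [CommSemiring V] [Module k₀ V] [Module k V]
    (Φ : Representation k G V) (ρ : Representation k₀ G V) {σ τ : G}
    (hgen : Subgroup.closure {σ, τ} = ⊤) (n : ℕ) (a : V)
    (hΦσ : ∀ x, Φ σ x = x ^ n) (hΦτ : ∀ x, Φ τ x = x)
    (hρσ : ∀ x, ρ σ x = x ^ n) (hρτ : ∀ x, ρ τ x = a * x) (g : G) (x y : V) :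
    ρ g (x * y) = Φ g x * ρ g y := by
  refine map_mul_eq_of_closure_eq_top Φ ρ hgen ?_ g x y
  rintro g (rfl | rfl) x y
  · rw [hρσ, hρσ, hΦσ, mul_pow]
  · rw [hρτ, hρτ, hΦτ, mul_left_comm]

end Semilinear

theorem asModule_projective_of_map_mul_eq {k₀ k G V : Type*} [Field k₀] [CommSemiring k]
    [Group G] [Fintype G] [CommRing V] [Algebra k₀ V] [Module k V]
    (Φ : Representation k G V) (ρ : Representation k₀ G V)
    (hρ : ∀ g x y, ρ g (x * y) = Φ g x * ρ g y) {c : V} (hc : ∑ g, Φ g c = 1) :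
    Module.Projective (MonoidAlgebra k₀ G) ρ.asModule :=
  ρ.asModule_projective_of_sum_conj_eq_id (LinearMap.mulLeft k₀ c) <| by
    ext x
    simp [hρ, ← Finset.sum_mul, hc]

section AlgAut

variable {k G A : Type*} [CommSemiring k] [Group G] [Semiring A] [Algebra k A]

def toAlgAut (ρ : Representation k G A) (hρ : ∀ g x y, ρ g (x * y) = ρ g x * ρ g y) :
    G →* (A ≃ₐ[k] A) where
  toFun g := AlgEquiv.ofLinearEquiv
    (LinearEquiv.ofLinearMap (ρ g) (ρ g⁻¹) (by ext; simp) (by ext; simp))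
    (by simpa [eq_comm] using hρ g 1 (ρ g⁻¹ 1)) (hρ g)
  map_one' := by ext; simp
  map_mul' g h := by ext x; exact LinearMap.congr_fun (map_mul ρ g h) x

@[simp]
theorem toAlgAut_apply (ρ : Representation k G A) (hρ : ∀ g x y, ρ g (x * y) = ρ g x * ρ g y)
    (g : G) (x : A) : ρ.toAlgAut hρ g x = ρ g x :=
  rfl

end AlgAut

end Representation

theorem MonoidHom.sum_comp_eq_card_ker_nsmul {G H M : Type*} [Group G] [Group H] [Fintype G]
    [Fintype H] [AddCommMonoid M] (φ : G →* H) (hφ : Function.Surjective φ) (F : H → M) :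
    ∑ g, F (φ g) = Nat.card φ.ker • ∑ h, F h := by
  classical
  rw [← Finset.sum_fiberwise Finset.univ φ, Finset.smul_sum]
  refine Finset.sum_congr rfl fun h _ => ?_
  rw [Finset.sum_congr rfl fun g hg => congrArg F (Finset.mem_filter.mp hg).2, Finset.sum_const,
    ← Nat.card_congr (φ.fiberEquivKerOfSurjective hφ h), ← Nat.card_eq_finsetCard]
  simp [Set.preimage, Fintype.card_subtype]

theorem FiniteField.cast_orderOf_ne_zero {K : Type*} [Field K] [Fintype K] (η : Kˣ) :
    (orderOf η : K) ≠ 0 := by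
  classical
  obtain ⟨m, hm⟩ : orderOf η ∣ Fintype.card K - 1 :=
    Fintype.card_units (α := K) ▸ orderOf_dvd_card
  have : ((Fintype.card K - 1 : ℕ) : K) = -1 := by
    rw [Nat.cast_sub Fintype.card_pos, FiniteField.cast_card_eq_zero, Nat.cast_one, zero_sub]
  intro h
  rw [hm, Nat.cast_mul, h, zero_mul] at this
  exact one_ne_zero (neg_eq_zero.mp this.symm)

theorem FiniteField.exists_sum_representation_eq_one {k l G : Type*} [Field k] [Fintype k]
    [Field l] [Fintype l] [Algebra k l] [Group G] [Fintype G] (ρ : Representation k G l)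
    (hρ : ∀ g x y, ρ g (x * y) = ρ g x * ρ g y) {σ : G} (hσ : ∀ x, ρ σ x = x ^ Fintype.card k)
    {e : ℕ} (hcard : Nat.card G = e * Module.finrank k l) (he : (e : k) ≠ 0) :
    ∃ c, ∑ g, ρ g c = 1 := by
  set ψ := ρ.toAlgAut hρ
  have hψσ : ψ σ = FiniteField.frobeniusAlgEquivOfAlgebraic k l := by
    ext x
    simp [ψ, hσ]
  have hψ : Function.Surjective ψ := fun γ => by
    obtain ⟨n, hn⟩ := (FiniteField.bijective_frobeniusAlgEquivOfAlgebraic_pow k l).2 γ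
    exact ⟨σ ^ n.1, by rw [map_pow, hψσ, ← hn]⟩
  have hker : Nat.card ψ.ker = e := by
    have := ψ.ker.card_mul_index
    rw [Subgroup.index_ker, MonoidHom.range_eq_top.mpr hψ, Subgroup.card_top,
      IsGalois.card_aut_eq_finrank, hcard] at this
    exact Nat.eq_of_mul_eq_mul_right Module.finrank_pos this
  obtain ⟨c, hc⟩ := Algebra.trace_surjective k l (e : k)⁻¹
  refine ⟨c, ?_⟩
  calc ∑ g, ρ g c = ∑ g, ψ g c := rfl
    _ = e • ∑ γ : Gal(l/k), γ c := by rw [ψ.sum_comp_eq_card_ker_nsmul hψ (· c), hker]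
    _ = algebraMap k l (e * Algebra.trace k l c) := by
      rw [← trace_eq_sum_automorphisms, nsmul_eq_mul, map_mul, map_natCast]
    _ = 1 := by rw [hc, mul_inv_cancel₀ he, map_one]

theorem stmt_12_general (p : ℕ) (hp : p.Prime)
    (k l : Type) [Field k] [Fintype k] [Field l] [Fintype l] [Algebra k l]
    [Algebra (ZMod p) l]
    (q e f : ℕ) (hq : q = Fintype.card k) (hf : f = Module.finrank k l)
    (G : Type) [Group G] [Fintype G] (σg τg : G)
    (hgen : Subgroup.closure ({σg, τg} : Set G) = ⊤)
    (hcard : Nat.card G = e * f)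
    (η : lˣ) (hη : orderOf η = e)
    (ρ : ℤ → Representation k G l)
    (hρσ : ∀ (r : ℤ) (x : l), ρ r σg x = x ^ q)
    (hρτ : ∀ (r : ℤ) (x : l), ρ r τg x = ((η ^ r : lˣ) : l) * x)
    (ρp : ℤ → Representation (ZMod p) G l)
    (hρpσ : ∀ (r : ℤ) (x : l), ρp r σg x = x ^ q)
    (hρpτ : ∀ (r : ℤ) (x : l), ρp r τg x = ((η ^ r : lˣ) : l) * x) :
    ∀ r : ℤ, Module.Projective (MonoidAlgebra k G) (ρ r).asModule ∧
      Module.Projective (MonoidAlgebra (ZMod p) G) (ρp r).asModule := by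
  have : Fact p.Prime := ⟨hp⟩
  subst hq hf
  have hρ₀τ : ∀ x, ρ 0 τg x = x := by simp [hρτ]
  have hρ₀ : ∀ g x y, ρ 0 g (x * y) = ρ 0 g x * ρ 0 g y :=
    (ρ 0).map_mul_eq_of_frobenius_twist _ hgen _ 1 (hρσ 0) hρ₀τ (hρσ 0) (by simpa using hρ₀τ)
  have he : (e : k) ≠ 0 := fun h => FiniteField.cast_orderOf_ne_zero η <| by
    rw [hη, ← map_natCast (algebraMap k l), h, map_zero]
  obtain ⟨c, hc⟩ := FiniteField.exists_sum_representation_eq_one (ρ 0) hρ₀ (hρσ 0) hcard he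
  intro r
  exact ⟨(ρ 0).asModule_projective_of_map_mul_eq (ρ r)
      ((ρ 0).map_mul_eq_of_frobenius_twist _ hgen _ _ (hρσ 0) hρ₀τ (hρσ r) (hρτ r)) hc,
    (ρ 0).asModule_projective_of_map_mul_eq (ρp r)
      ((ρ 0).map_mul_eq_of_frobenius_twist _ hgen _ _ (hρσ 0) hρ₀τ (hρpσ r) (hρpτ r)) hc⟩

/-- For every `r ∈ ℤ`, the module `l(r)` is projective both as a `k[G]`-module
and as an `𝔽_p[G]`-module. -/
theorem stmt_12 (p : ℕ) (hp : p.Prime)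
    (k l : Type) [Field k] [Fintype k] [CharP k p] [Field l] [Fintype l] [Algebra k l]
    [Algebra (ZMod p) l]
    (q e f : ℕ) (hq : q = Fintype.card k) (hf : f = Module.finrank k l) (he : 0 < e)
    (G : Type) [Group G] [Fintype G] (σg τg : G)
    (hσ : orderOf σg = f) (hτ : orderOf τg = e)
    (hrel : σg * τg * σg⁻¹ = τg ^ q)
    (hgen : Subgroup.closure ({σg, τg} : Set G) = ⊤)
    (hcard : Nat.card G = e * f)
    (η : lˣ) (hη : orderOf η = e)
    (ρ : ℤ → Representation k G l)
    (hρσ : ∀ (r : ℤ) (x : l), ρ r σg x = x ^ q)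
    (hρτ : ∀ (r : ℤ) (x : l), ρ r τg x = ((η ^ r : lˣ) : l) * x)
    (ρp : ℤ → Representation (ZMod p) G l)
    (hρpσ : ∀ (r : ℤ) (x : l), ρp r σg x = x ^ q)
    (hρpτ : ∀ (r : ℤ) (x : l), ρp r τg x = ((η ^ r : lˣ) : l) * x) :
    ∀ r : ℤ, Module.Projective (MonoidAlgebra k G) (ρ r).asModule ∧
      Module.Projective (MonoidAlgebra (ZMod p) G) (ρp r).asModule :=
  stmt_12_general p hp k l q e f hq hf G σg τg hgen hcard η hη ρ hρσ hρτ ρp hρpσ hρpτ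
end

section
/- Let L be a local field of characteristic p (a Laurent series field over a finite field) with ring of integers 𝔬_L and maximal ideal 𝔭_L, and let ℘(x) = x^p − x. For r ∈ ℤ, let p̄^r denote the image of 𝔭_L^r in L⁺/℘(L⁺). Then p̄^r = {0} for all r > 0, and the image of 𝔬_L in L⁺/℘(L⁺) is isomorphic to 𝔽_p (via the residue map followed by the trace to 𝔽_p). -/
/-!
Hensel's lemma for `T ^ p - T - x` over `l⟦s⟧` (the derivative of `T ^ p - T` is `-1`) shows that
every `x ∈ 𝔭_L` lies in `℘(L)`. Hence the image of `𝔬_L` in `L/℘(L)` is the image of the constants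
`l`, and a constant `c` lies in `℘(L)` only if it lies in `℘(l)`: a solution of `y ^ p - y = c` has no
pole, since the leading term of a pole of `y ^ p` would be uncancelled, so reducing it modulo `s`
gives a solution in `l`. The image of `𝔬_L` is therefore `l/℘(l)`, of order `|ker ℘| = |𝔽_p| = p`.
-/

/-- The fractional ideal `𝔭_L^r ⊆ L = l((s))`, as an additive subgroup:
series with coefficients vanishing in degrees `< r`. -/
def pid (l : Type) [Field l] (r : ℤ) : AddSubgroup (LaurentSeries l) where
  carrier := {x | ∀ n : ℤ, n < r → x.coeff n = 0}
  zero_mem' := by intro n hn; simp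
  add_mem' := by intro a b ha hb n hn; simp [HahnSeries.coeff_add, ha n hn, hb n hn]
  neg_mem' := by intro a ha n hn; simp [HahnSeries.coeff_neg, ha n hn]

/-- The Artin–Schreier map `℘(x) = x^p - x` as an additive map on `L = l((s))`
(in characteristic `p`). -/
noncomputable def wp (p : ℕ) (l : Type) [Field l] [CharP l p] (hp : p.Prime) :
    LaurentSeries l →+ LaurentSeries l where
  toFun x := x ^ p - x
  map_zero' := by simp [zero_pow hp.ne_zero]
  map_add' := by
    intro x y
    haveI : CharP (LaurentSeries l) p :=
      charP_of_injective_ringHom (HahnSeries.C_injective (Γ := ℤ) (R := l)) p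
    haveI := Fact.mk hp
    show (x + y) ^ p - (x + y) = (x ^ p - x) + (y ^ p - y)
    rw [add_pow_char]
    ring

noncomputable def artinSchreier (R : Type*) [CommRing R] (p : ℕ) [ExpChar R p] : R →+ R :=
  (frobenius R p : R →+ R) - AddMonoidHom.id R

@[simp]
theorem artinSchreier_apply {R : Type*} [CommRing R] {p : ℕ} [ExpChar R p] (x : R) :
    artinSchreier R p x = x ^ p - x := rfl

theorem card_quotient_range_artinSchreier (F : Type*) [Field F] [Finite F] (p : ℕ) [Fact p.Prime]
    [CharP F p] : Nat.card (F ⧸ (artinSchreier F p).range) = p := by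
  rw [← AddSubgroup.index_eq_card, AddSubgroup.index_range]
  refine (Nat.card_congr ?_).trans (Subfield.card_bot F p)
  exact Equiv.subtypeEquivRight fun x => by
    simp [sub_eq_zero, Subfield.mem_bot_iff_pow_eq_self F p]

namespace PowerSeries

theorem exists_pow_sub_self_eq_of_constantCoeff_eq_zero {R : Type*} [CommRing R] {p : ℕ}
    [CharP R p] (hp : 1 < p) {x : PowerSeries R} (hx : constantCoeff x = 0) :
    ∃ y : PowerSeries R, y ^ p - y = x := by
  let f : Polynomial (PowerSeries R) := Polynomial.X ^ p - (Polynomial.X + Polynomial.C x)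
  have hf : f.Monic := by
    refine Polynomial.monic_X_pow_sub ((Polynomial.degree_add_le _ _).trans_lt ?_)
    refine max_lt (Polynomial.degree_X_le.trans_lt ?_) (Polynomial.degree_C_le.trans_lt ?_) <;>
      exact_mod_cast (by omega)
  have hf0 : f.eval 0 ∈ Ideal.span {X} := by
    simpa [f, zero_pow (by omega : p ≠ 0), Ideal.mem_span_singleton, X_dvd_iff] using hx
  have hp0 : (p : PowerSeries R) = 0 := by
    rw [← map_natCast (C (R := R)), CharP.cast_eq_zero, map_zero]
  have hf' : IsUnit (Ideal.Quotient.mk (Ideal.span {X}) (f.derivative.eval 0)) := by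
    have : f.derivative.eval 0 = -1 := by simp [f, Polynomial.derivative_X_pow, hp0]
    rw [this, map_neg, map_one]
    exact isUnit_neg_one (α := PowerSeries R ⧸ Ideal.span {(X : PowerSeries R)})
  obtain ⟨y, hy, -⟩ := HenselianRing.is_henselian f hf 0 hf0 hf'
  exact ⟨y, by simpa [f, sub_eq_zero, sub_add_eq_sub_sub] using hy⟩

end PowerSeries

open PowerSeries

section pid

variable {l : Type} [Field l]

theorem mem_pid_iff_le_orderTop {r : ℤ} {x : LaurentSeries l} :
    x ∈ pid l r ↔ (r : WithTop ℤ) ≤ x.orderTop := by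
  rw [HahnSeries.le_orderTop_iff_forall]
  simp [pid]

theorem pid_antitone : Antitone (pid l) := fun _ _ hrt _ hx n hn => hx n (hn.trans_le hrt)

theorem C_mem_pid_zero (c : l) : HahnSeries.C c ∈ pid l 0 :=
  fun n hn => by rw [HahnSeries.C_apply, HahnSeries.coeff_single_of_ne hn.ne]

theorem exists_ofPowerSeries_eq_of_mem_pid_zero {x : LaurentSeries l} (hx : x ∈ pid l 0) :
    ∃ f : PowerSeries l, (f : LaurentSeries l) = x ∧ constantCoeff f = x.coeff 0 := by
  refine ⟨PowerSeries.mk fun n => x.coeff n, ?_, by simp⟩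
  ext n
  rw [coeff_coe]
  split_ifs with hn
  · exact (hx n hn).symm
  · rw [coeff_mk, Int.natAbs_of_nonneg (not_lt.mp hn)]

theorem mem_pid_zero_of_pow_sub_self_mem {p : ℕ} (hp : 1 < p) {y : LaurentSeries l}
    (hy : y ^ p - y ∈ pid l 0) : y ∈ pid l 0 := by
  rw [mem_pid_iff_le_orderTop] at hy ⊢
  by_contra! hneg
  obtain ⟨n, hn⟩ := WithTop.ne_top_iff_exists.mp (hneg.trans (WithTop.coe_lt_top 0)).ne
  rw [← hn] at hneg
  have hn0 : n < 0 := by exact_mod_cast hneg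
  have hpn : p • n < n := by rw [nsmul_eq_mul]; nlinarith
  have hpow : (y ^ p).orderTop = ((p • n : ℤ) : WithTop ℤ) := by
    rw [← HahnSeries.addVal_apply, AddValuation.map_pow, HahnSeries.addVal_apply, ← hn,
      WithTop.coe_nsmul]
  rw [HahnSeries.orderTop_sub (by rw [hpow, ← hn]; exact_mod_cast hpn), hpow] at hy
  exact absurd (hpn.trans hn0) (not_lt.mpr (by exact_mod_cast hy))

theorem sub_C_coeff_zero_mem_pid_one {x : LaurentSeries l} (hx : x ∈ pid l 0) :
    x - HahnSeries.C (x.coeff 0) ∈ pid l 1 := by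
  intro n hn
  rcases (show n ≤ 0 by omega).lt_or_eq with hn | rfl
  · rw [HahnSeries.coeff_sub, hx n hn, HahnSeries.C_apply, HahnSeries.coeff_single_of_ne hn.ne,
      sub_zero]
  · simp

theorem exists_pow_sub_self_eq_of_pow_sub_self_eq_C {p : ℕ} (hp : 1 < p) {y : LaurentSeries l}
    {c : l} (h : y ^ p - y = HahnSeries.C c) : ∃ a : l, a ^ p - a = c := by
  obtain ⟨f, rfl, -⟩ := exists_ofPowerSeries_eq_of_mem_pid_zero
    (mem_pid_zero_of_pow_sub_self_mem hp (h ▸ C_mem_pid_zero c))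
  have hf : f ^ p - f = PowerSeries.C c := by
    apply HahnSeries.ofPowerSeries_injective (Γ := ℤ)
    simpa using h
  exact ⟨constantCoeff f, by simpa using congrArg constantCoeff hf⟩

end pid

section wp

variable (p : ℕ) (hp : p.Prime) (l : Type) [Field l] [CharP l p]

theorem pid_one_le_range_wp : pid l 1 ≤ (wp p l hp).range := by
  intro x hx
  obtain ⟨f, rfl, hf⟩ := exists_ofPowerSeries_eq_of_mem_pid_zero (pid_antitone zero_le_one hx)
  obtain ⟨y, hy⟩ := exists_pow_sub_self_eq_of_constantCoeff_eq_zero hp.one_lt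
    (hf.trans (hx 0 zero_lt_one))
  exact ⟨y, by simp [wp, ← hy]⟩

noncomputable def residueClass : l →+ LaurentSeries l ⧸ (wp p l hp).range :=
  (QuotientAddGroup.mk' _).comp (HahnSeries.C : l →+* LaurentSeries l).toAddMonoidHom

@[simp]
theorem residueClass_apply (c : l) :
    residueClass p hp l c = (HahnSeries.C c : LaurentSeries l) := rfl

theorem range_residueClass :
    (residueClass p hp l).range = (pid l 0).map (QuotientAddGroup.mk' (wp p l hp).range) := by
  ext z
  constructor
  · rintro ⟨c, rfl⟩
    exact ⟨_, C_mem_pid_zero c, rfl⟩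
  · rintro ⟨x, hx, rfl⟩
    refine ⟨x.coeff 0, ?_⟩
    rw [residueClass_apply, QuotientAddGroup.mk'_apply, eq_comm, QuotientAddGroup.eq_iff_sub_mem]
    exact pid_one_le_range_wp p hp l (sub_C_coeff_zero_mem_pid_one hx)

theorem ker_residueClass [Fact p.Prime] :
    (residueClass p hp l).ker = (artinSchreier l p).range := by
  ext c
  rw [AddMonoidHom.mem_ker, residueClass_apply, QuotientAddGroup.eq_zero_iff]
  constructor
  · rintro ⟨y, hy⟩
    exact exists_pow_sub_self_eq_of_pow_sub_self_eq_C hp.one_lt hy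
  · rintro ⟨a, rfl⟩
    exact ⟨HahnSeries.C a, by simp [wp]⟩

end wp

/-- In `L = l((s))` of characteristic `p`, the image of `𝔭_L^r` in `L⁺/℘(L⁺)` is
trivial for every `r > 0`, and the image of `𝔬_L` is isomorphic to `𝔽_p`. -/
theorem stmt_17 (p : ℕ) (hp : p.Prime) (l : Type) [Field l] [Fintype l] [CharP l p] :
    (∀ r : ℤ, 0 < r →
      (pid l r).map (QuotientAddGroup.mk' (wp p l hp).range) = ⊥) ∧
    Nonempty (↥((pid l 0).map (QuotientAddGroup.mk' (wp p l hp).range)) ≃+ ZMod p) := by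
  have := Fact.mk hp
  refine ⟨fun r hr => ?_, ?_⟩
  · rw [AddSubgroup.map_eq_bot_iff, QuotientAddGroup.ker_mk']
    exact (pid_antitone hr).trans (pid_one_le_range_wp p hp l)
  · have hcard : Nat.card ((pid l 0).map (QuotientAddGroup.mk' (wp p l hp).range)) = p := by
      rw [← range_residueClass, ← Nat.card_congr (QuotientAddGroup.quotientKerEquivRange _).toEquiv,
        ker_residueClass, card_quotient_range_artinSchreier]
    exact ⟨addEquivOfPrimeCardEq hcard (Nat.card_zmod p)⟩
end

section
/- Let L be a local field of characteristic p with residue field l and maximal ideal 𝔭_L, and let ℘(x) = x^p − x. For every negative integer r with p ∤ r, the quotient of the images of 𝔭_L^r and 𝔭_L^{r+1} in L⁺/℘(L⁺) is isomorphic to l as an additive group; and for every negative r divisible by p, the images of 𝔭_L^r and 𝔭_L^{r+1} in L⁺/℘(L⁺) coincide. -/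
/-- The image `p̄^r` of `𝔭_L^r` in `L⁺/℘(L⁺)`. -/
noncomputable def pbar (p : ℕ) (l : Type) [Field l] [CharP l p] (hp : p.Prime) (r : ℤ) :
    AddSubgroup (LaurentSeries l ⧸ (wp p l hp).range) :=
  (pid l r).map (QuotientAddGroup.mk' (wp p l hp).range)


/-!
Write `℘ = wp` and `v` for the valuation. If `v y < 0` then `v (℘ y) = p · v y`, so a series
`℘ y` of valuation `≥ r` with `p ∤ r` has vanishing `r`-th coefficient. Hence the `r`-th
coefficient descends to `p̄^r`, and its kernel is `p̄^{r+1}`. When `r = p m` with `m < 0`, the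
leading term `c s^r` of an element of `𝔭_L^r` equals `℘ (c^{1/p} s^m)` up to a term in
`𝔭_L^{r+1}`, so `p̄^r = p̄^{r+1}`.
-/

open HahnSeries

section ArtinSchreier

variable {l : Type} [Field l] {p : ℕ} [CharP l p]

theorem mem_pid_iff {r : ℤ} {x : LaurentSeries l} :
    x ∈ pid l r ↔ ∀ n : ℤ, n < r → x.coeff n = 0 :=
  Iff.rfl

theorem pid_anti {r s : ℤ} (h : r ≤ s) : pid l s ≤ pid l r :=
  fun _ hx n hn => hx n (hn.trans_le h)

theorem mem_pid_succ_iff {r : ℤ} {x : LaurentSeries l} :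
    x ∈ pid l (r + 1) ↔ x ∈ pid l r ∧ x.coeff r = 0 := by
  simp only [mem_pid_iff, Int.lt_add_one_iff, le_iff_lt_or_eq]
  exact ⟨fun h => ⟨fun n hn => h n (.inl hn), h r (.inr rfl)⟩,
    fun ⟨h, hr⟩ n => Or.rec (h n) (fun hn => hn ▸ hr)⟩

theorem single_mem_pid (r : ℤ) (c : l) : single r c ∈ pid l r :=
  fun _ hn => coeff_single_of_ne hn.ne

theorem sub_single_coeff_mem_pid_succ {r : ℤ} {x : LaurentSeries l} (hx : x ∈ pid l r) :
    x - single r (x.coeff r) ∈ pid l (r + 1) :=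
  mem_pid_succ_iff.2 ⟨sub_mem hx (single_mem_pid r _), by simp⟩

theorem wp_apply (hp : p.Prime) (y : LaurentSeries l) : wp p l hp y = y ^ p - y :=
  rfl

theorem wp_single (hp : p.Prime) (m : ℤ) (a : l) :
    wp p l hp (single m a) = single (p * m) (a ^ p) - single m a := by
  rw [wp_apply, single_pow, nsmul_eq_mul]

theorem coeff_eq_zero_of_mem_pid_of_mem_range (hp : p.Prime) {r : ℤ} (hr : r < 0)
    (hpr : ¬ (p : ℤ) ∣ r) {x : LaurentSeries l} (hx : x ∈ pid l r)
    (hxR : x ∈ (wp p l hp).range) : x.coeff r = 0 := by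
  obtain ⟨y, rfl⟩ := hxR
  rcases eq_or_ne y 0 with rfl | hy0
  · simp
  have hp2 : (2 : ℤ) ≤ p := mod_cast hp.two_le
  have hord : (y ^ p).order = p * y.order := by simp
  suffices r < p * y.order ∧ r < y.order by
    rw [wp_apply, coeff_sub, coeff_eq_zero_of_lt_order (hord ▸ this.1),
      coeff_eq_zero_of_lt_order this.2, sub_zero]
  rcases le_or_gt 0 y.order with hv | hv
  · constructor <;> nlinarith
  have hpv : p * y.order < y.order := by nlinarith
  -- `℘ y` has the nonzero coefficient of `y ^ p` in degree `p · v y`, so `r ≤ p · v y`.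
  have hle : r ≤ p * y.order := by
    by_contra! hlt
    apply coeff_order_eq_zero.not.2 (pow_ne_zero p hy0)
    have := hx _ hlt
    rwa [wp_apply, coeff_sub, coeff_eq_zero_of_lt_order hpv, sub_zero, ← hord] at this
  have hne : r ≠ p * y.order := fun h => hpr ⟨_, h⟩
  omega

theorem mk_mem_pbar_succ_iff (hp : p.Prime) {r : ℤ} (hr : r < 0) (hpr : ¬ (p : ℤ) ∣ r)
    {x : LaurentSeries l} (hx : x ∈ pid l r) :
    QuotientAddGroup.mk' (wp p l hp).range x ∈ pbar p l hp (r + 1) ↔ x.coeff r = 0 := by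
  refine ⟨fun h => ?_, fun h => ⟨x, mem_pid_succ_iff.2 ⟨hx, h⟩, rfl⟩⟩
  obtain ⟨b, hb, hbx⟩ := AddSubgroup.mem_map.1 h
  have hxb : x - b ∈ (wp p l hp).range := by
    rw [← QuotientAddGroup.eq_iff_sub_mem]; exact hbx.symm
  have := coeff_eq_zero_of_mem_pid_of_mem_range hp hr hpr
    (sub_mem hx (pid_anti (Int.le_add_one le_rfl) hb)) hxb
  rwa [coeff_sub, (mem_pid_succ_iff.1 hb).2, sub_zero] at this

theorem exists_coeff_lift_to_pbar (hp : p.Prime) {r : ℤ} (hr : r < 0) (hpr : ¬ (p : ℤ) ∣ r) :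
    ∃ φ : pbar p l hp r →+ l, ∀ x : pid l r,
      φ ((QuotientAddGroup.mk' (wp p l hp).range).addSubgroupMap (pid l r) x) = x.1.coeff r := by
  let π := (QuotientAddGroup.mk' (wp p l hp).range).addSubgroupMap (pid l r)
  have hker : π.ker ≤ ((coeff.addMonoidHom r).comp (pid l r).subtype).ker := fun x hx =>
    coeff_eq_zero_of_mem_pid_of_mem_range hp hr hpr x.2
      ((QuotientAddGroup.eq_zero_iff _).1 (congrArg Subtype.val hx))
  exact ⟨π.liftOfSurjective (AddMonoidHom.addSubgroupMap_surjective _ _) ⟨_, hker⟩,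
    π.liftOfRightInverse_comp_apply _ _ ⟨_, hker⟩⟩

theorem pbar_eq_pbar_succ_of_dvd [PerfectField l] (hp : p.Prime) {r : ℤ} (hr : r < 0)
    (hdvd : (p : ℤ) ∣ r) : pbar p l hp r = pbar p l hp (r + 1) := by
  refine le_antisymm ?_ (AddSubgroup.map_mono (pid_anti (Int.le_add_one le_rfl)))
  rintro _ ⟨x, hx, rfl⟩
  obtain ⟨m, rfl⟩ := hdvd
  have hm : p * m < m := by nlinarith [hp.two_le]
  have := ExpChar.prime (R := l) hp
  obtain ⟨a, ha⟩ := surjective_frobenius l p (x.coeff (p * m))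
  have hmem : x - wp p l hp (single m a) ∈ pid l (p * m + 1) := by
    rw [wp_single, ← frobenius_def, ha, sub_sub_eq_add_sub, add_sub_right_comm]
    exact add_mem (sub_single_coeff_mem_pid_succ hx) (pid_anti (by omega) (single_mem_pid m a))
  refine ⟨_, hmem, ?_⟩
  rw [QuotientAddGroup.mk'_apply, QuotientAddGroup.mk'_apply, QuotientAddGroup.eq_iff_sub_mem]
  simp

end ArtinSchreier

/-- For `r < 0` with `p ∤ r`, the quotient `p̄^r/p̄^{r+1}` of the images of
`𝔭_L^r` and `𝔭_L^{r+1}` in `L⁺/℘(L⁺)` is isomorphic to the additive group of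
the residue field `l` (expressed as: there is a surjective additive map
`p̄^r → l` whose kernel is exactly `p̄^{r+1}`); and for `r < 0` with `p ∣ r`,
the two images coincide. -/
theorem stmt_18 (p : ℕ) (hp : p.Prime) (l : Type) [Field l] [Fintype l] [CharP l p] :
    ∀ r : ℤ, r < 0 →
      (¬ (p : ℤ) ∣ r →
        ∃ φ : ↥(pbar p l hp r) →+ l, Function.Surjective φ ∧
          ∀ x : ↥(pbar p l hp r), φ x = 0 ↔ (x : LaurentSeries l ⧸ (wp p l hp).range) ∈ pbar p l hp (r + 1)) ∧
      ((p : ℤ) ∣ r → pbar p l hp r = pbar p l hp (r + 1)) := by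
  intro r hr
  refine ⟨fun hpr => ?_, pbar_eq_pbar_succ_of_dvd (l := l) hp hr⟩
  obtain ⟨φ, hφ⟩ := exists_coeff_lift_to_pbar (l := l) hp hr hpr
  refine ⟨φ, fun c => ⟨_, (hφ ⟨_, single_mem_pid r c⟩).trans (coeff_single_same r c)⟩, ?_⟩
  intro ξ
  obtain ⟨x, rfl⟩ := AddMonoidHom.addSubgroupMap_surjective _ _ ξ
  rw [hφ, ← mk_mem_pbar_succ_iff hp hr hpr x.2]
  rfl
end
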